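/- (Existence and uniqueness of the adjustment coefficient.) Let Z₁ be a real-valued integrable random variable with E[Z₁] < 0 and P[Z₁ > 0] > 0, and suppose there exists θ̄ ∈ (0, ∞] such that Γ_Z(θ) := ln E[exp(θ Z₁)] < ∞ for all θ ∈ [0, θ̄) and Γ_Z(θ) → ∞ as θ ↗ θ̄. Then there exists a unique θ_L ∈ (0, θ̄) such that Γ_Z(θ_L) = 0. -/

import Mathlib

open MeasureTheory ProbabilityTheory Filter Topology

/-- The cumulant generating function `Γ_Z(θ) = ln E[exp(θ Z)]`, with values in `(-∞, ∞]`. -/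
noncomputable def cgfE {Ω : Type*} [MeasurableSpace Ω] (P : Measure Ω) (Z : Ω → ℝ) (θ : ℝ) :
    EReal :=
  ENNReal.log (∫⁻ ω, ENNReal.ofReal (Real.exp (θ * Z ω)) ∂P)



lemma aemeas_exp {Ω : Type*} [MeasurableSpace Ω] {P : Measure Ω}
    {Z : Ω → ℝ} (hZ : AEMeasurable Z P) (θ : ℝ) :
    AEMeasurable (fun ω => Real.exp (θ * Z ω)) P :=
  Real.measurable_exp.comp_aemeasurable (aemeasurable_const.mul hZ)

lemma integrable_exp_of_lintegral_ne_top {Ω : Type*} [MeasurableSpace Ω] {P : Measure Ω}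
    {Z : Ω → ℝ} (hZ : AEMeasurable Z P) {θ : ℝ}
    (h : ∫⁻ ω, ENNReal.ofReal (Real.exp (θ * Z ω)) ∂P ≠ ⊤) :
    Integrable (fun ω => Real.exp (θ * Z ω)) P := by
  refine ⟨(aemeas_exp hZ θ).aestronglyMeasurable, ?_⟩
  rw [hasFiniteIntegral_iff_ofReal (Filter.Eventually.of_forall fun ω => (Real.exp_pos _).le)]
  exact h.lt_top

lemma lintegral_exp_eq_ofReal_mgf {Ω : Type*} [MeasurableSpace Ω] {P : Measure Ω}
    {Z : Ω → ℝ} {θ : ℝ} (hi : Integrable (fun ω => Real.exp (θ * Z ω)) P) :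
    ∫⁻ ω, ENNReal.ofReal (Real.exp (θ * Z ω)) ∂P = ENNReal.ofReal (mgf Z P θ) := by
  rw [mgf]
  exact (ofReal_integral_eq_lintegral_ofReal hi
    (Filter.Eventually.of_forall fun ω => (Real.exp_pos _).le)).symm

lemma lintegral_exp_holder {Ω : Type*} [MeasurableSpace Ω] (P : Measure Ω)
    {Z : Ω → ℝ} (hZ : AEMeasurable Z P) {a b t : ℝ} (ht : 0 < t) (ht1 : t < 1) :
    ∫⁻ ω, ENNReal.ofReal (Real.exp ((t * a + (1 - t) * b) * Z ω)) ∂P ≤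
      (∫⁻ ω, ENNReal.ofReal (Real.exp (a * Z ω)) ∂P) ^ t *
      (∫⁻ ω, ENNReal.ofReal (Real.exp (b * Z ω)) ∂P) ^ (1 - t) := by
  have ht1' : 0 < 1 - t := by linarith
  have hpq : (1/t).HolderConjugate (1/(1-t)) := by
    constructor
    · rw [one_div, one_div, inv_inv, inv_inv, inv_one]; ring
    · positivity
    · positivity
  have hf : AEMeasurable (fun ω => ENNReal.ofReal (Real.exp (a * Z ω)) ^ t) P :=
    ((aemeas_exp hZ a).ennreal_ofReal).pow_const t
  have hg : AEMeasurable (fun ω => ENNReal.ofReal (Real.exp (b * Z ω)) ^ (1-t)) P :=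
    ((aemeas_exp hZ b).ennreal_ofReal).pow_const (1-t)
  have key := ENNReal.lintegral_mul_le_Lp_mul_Lq P hpq hf hg
  calc ∫⁻ ω, ENNReal.ofReal (Real.exp ((t * a + (1 - t) * b) * Z ω)) ∂P
      = ∫⁻ ω, (ENNReal.ofReal (Real.exp (a * Z ω)) ^ t *
          ENNReal.ofReal (Real.exp (b * Z ω)) ^ (1-t)) ∂P := by
        refine lintegral_congr fun ω => ?_
        rw [ENNReal.ofReal_rpow_of_pos (Real.exp_pos _),
          ENNReal.ofReal_rpow_of_pos (Real.exp_pos _),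
          ← Real.exp_mul, ← Real.exp_mul, ← ENNReal.ofReal_mul (Real.exp_pos _).le,
          ← Real.exp_add]
        congr 2
        ring
    _ ≤ (∫⁻ ω, (ENNReal.ofReal (Real.exp (a * Z ω)) ^ t) ^ (1/t) ∂P) ^ (1/(1/t)) *
        (∫⁻ ω, (ENNReal.ofReal (Real.exp (b * Z ω)) ^ (1-t)) ^ (1/(1-t)) ∂P) ^ (1/(1/(1-t))) := by
        simpa using key
    _ = _ := by
        rw [one_div_one_div, one_div_one_div]
        congr 1
        · congr 1
          refine lintegral_congr fun ω => ?_
          rw [← ENNReal.rpow_mul, mul_one_div, div_self ht.ne', ENNReal.rpow_one]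
        · congr 1
          refine lintegral_congr fun ω => ?_
          rw [← ENNReal.rpow_mul, mul_one_div, div_self ht1'.ne', ENNReal.rpow_one]


lemma abs_exp_slope_le {θ θ0 z : ℝ} (h1 : 0 < θ) (h2 : θ ≤ θ0) :
    |(Real.exp (θ * z) - 1) / θ| ≤ |z| + Real.exp ((2 * θ0) * z) / θ0 := by
  have hθ0 : 0 < θ0 := h1.trans_le h2
  have hexp : (0:ℝ) < Real.exp ((2 * θ0) * z) := Real.exp_pos _
  rcases le_or_gt z 0 with hz | hz
  · have hθz : θ * z ≤ 0 := mul_nonpos_of_nonneg_of_nonpos h1.le hz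
    have e1 : Real.exp (θ * z) ≤ 1 := Real.exp_le_one_iff.mpr hθz
    have e2 : 1 + θ * z ≤ Real.exp (θ * z) := by
      have := Real.add_one_le_exp (θ * z); linarith
    have habs : |Real.exp (θ * z) - 1| ≤ θ * |z| := by
      rw [abs_of_nonpos (by linarith), abs_of_nonpos hz]; linarith
    rw [abs_div, abs_of_pos h1, div_le_iff₀ h1]
    have : |z| ≤ |z| + Real.exp (2 * θ0 * z) / θ0 := by
      have : (0:ℝ) ≤ Real.exp (2 * θ0 * z) / θ0 := by positivity
      linarith
    nlinarith [abs_nonneg z, div_pos hexp hθ0]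
  · have hθz : 0 ≤ θ * z := le_of_lt (mul_pos h1 hz)
    have e0 : (1:ℝ) ≤ Real.exp (θ * z) := Real.one_le_exp hθz
    have e1 : Real.exp (θ * z) - 1 ≤ θ * z * Real.exp (θ * z) := by
      have h := Real.add_one_le_exp (-(θ * z))
      rw [Real.exp_neg] at h
      have hp : (0:ℝ) < Real.exp (θ * z) := Real.exp_pos _
      have : (1 - θ * z) * Real.exp (θ * z) ≤ 1 := by
        rw [sub_mul, one_mul]
        calc Real.exp (θ * z) - θ * z * Real.exp (θ * z)
            = (1 - θ * z) * Real.exp (θ * z) := by ring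
          _ ≤ (Real.exp (θ * z))⁻¹ * Real.exp (θ * z) := by
              apply mul_le_mul_of_nonneg_right _ hp.le
              linarith
          _ = 1 := inv_mul_cancel₀ hp.ne'
      linarith
    have e2 : Real.exp (θ * z) ≤ Real.exp (θ0 * z) :=
      Real.exp_le_exp.mpr (mul_le_mul_of_nonneg_right h2 hz.le)
    have e3 : θ0 * z ≤ Real.exp (θ0 * z) := by
      have := Real.add_one_le_exp (θ0 * z); linarith
    have e4 : Real.exp (θ0 * z) * Real.exp (θ0 * z) = Real.exp ((2 * θ0) * z) := by
      rw [← Real.exp_add]; congr 1; ring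
    have hzexp : z * Real.exp (θ0 * z) ≤ Real.exp ((2 * θ0) * z) / θ0 := by
      rw [le_div_iff₀ hθ0, ← e4]
      have hz' : z ≤ Real.exp (θ0 * z) / θ0 := by rw [le_div_iff₀ hθ0]; linarith
      calc z * Real.exp (θ0 * z) * θ0 = (z * θ0) * Real.exp (θ0 * z) := by ring
        _ ≤ Real.exp (θ0 * z) * Real.exp (θ0 * z) := by
            apply mul_le_mul_of_nonneg_right _ (Real.exp_pos _).le
            nlinarith
    have hmain : (Real.exp (θ * z) - 1) / θ ≤ Real.exp ((2 * θ0) * z) / θ0 := by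
      rw [div_le_iff₀ h1]
      have : z * Real.exp (θ * z) ≤ z * Real.exp (θ0 * z) :=
        mul_le_mul_of_nonneg_left e2 hz.le
      nlinarith
    rw [abs_div, abs_of_pos h1, abs_of_nonneg (by linarith : (0:ℝ) ≤ Real.exp (θ*z) - 1)]
    have : (0:ℝ) ≤ |z| := abs_nonneg z
    rw [div_le_iff₀ h1] at hmain ⊢
    nlinarith

lemma eventually_mgf_lt_one {Ω : Type*} [MeasurableSpace Ω] {P : Measure Ω}
    [IsProbabilityMeasure P] {Z : Ω → ℝ} (hint : Integrable Z P)
    (hmean : ∫ ω, Z ω ∂P < 0) {θ0 : ℝ} (hθ0 : 0 < θ0)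
    (hbint : Integrable (fun ω => Real.exp ((2 * θ0) * Z ω)) P)
    (hi : ∀ θ ∈ Set.Ioc (0:ℝ) θ0, Integrable (fun ω => Real.exp (θ * Z ω)) P) :
    ∀ᶠ θ in 𝓝[>] (0:ℝ), mgf Z P θ < 1 := by
  have hZ := hint.aemeasurable
  set F : ℝ → Ω → ℝ := fun θ ω => (Real.exp (θ * Z ω) - 1) / θ with hF
  have hIoc : Set.Ioc (0:ℝ) θ0 ∈ 𝓝[>] (0:ℝ) :=
    Ioc_mem_nhdsGT_of_mem (Set.left_mem_Ico.mpr hθ0)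
  have hbound : Integrable (fun ω => |Z ω| + Real.exp ((2 * θ0) * Z ω) / θ0) P :=
    hint.abs.add (hbint.div_const θ0)
  have key : Tendsto (fun θ => ∫ ω, F θ ω ∂P) (𝓝[>] (0:ℝ)) (𝓝 (∫ ω, Z ω ∂P)) := by
    apply tendsto_integral_filter_of_dominated_convergence _ ?_ ?_ hbound ?_
    · exact Filter.Eventually.of_forall fun θ =>
        (((aemeas_exp hZ θ).sub aemeasurable_const).div_const θ).aestronglyMeasurable
    · filter_upwards [hIoc] with θ hθ
      exact Filter.Eventually.of_forall fun ω => by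
        simpa [Real.norm_eq_abs] using abs_exp_slope_le hθ.1 hθ.2
    · refine Filter.Eventually.of_forall fun ω => ?_
      have hd : HasDerivAt (fun θ : ℝ => Real.exp (θ * Z ω)) (Z ω) 0 := by
        have h1 : HasDerivAt (fun θ : ℝ => θ * Z ω) (Z ω) 0 := by
          simpa using (hasDerivAt_id (0:ℝ)).mul_const (Z ω)
        simpa using h1.exp
      have h2 : Tendsto (slope (fun θ : ℝ => Real.exp (θ * Z ω)) 0) (𝓝[>] (0:ℝ)) (𝓝 (Z ω)) :=
        (hasDerivAt_iff_tendsto_slope.mp hd).mono_left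
          (nhdsWithin_mono _ fun x hx => ne_of_gt hx)
      refine h2.congr' ?_
      filter_upwards [self_mem_nhdsWithin] with θ hθ
      simp [slope_def_field, F]
  have hev : ∀ᶠ θ in 𝓝[>] (0:ℝ), ∫ ω, F θ ω ∂P < 0 :=
    key.eventually_lt_const hmean
  have heq : ∀ᶠ θ in 𝓝[>] (0:ℝ), ∫ ω, F θ ω ∂P = (mgf Z P θ - 1) / θ := by
    filter_upwards [hIoc] with θ hθ
    have : (fun ω => F θ ω) = fun ω => (Real.exp (θ * Z ω) - 1) / θ := rfl
    rw [this, integral_div, integral_sub (hi θ hθ) (integrable_const 1), integral_const]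
    simp [mgf]
  filter_upwards [hev, heq, self_mem_nhdsWithin] with θ h1 h2 h3
  rw [h2] at h1
  rcases div_neg_iff.mp h1 with ⟨_, h⟩ | ⟨h, _⟩
  · exact absurd h3 (by simpa using h.le)
  · linarith


lemma exists_big {θbar : EReal} {g : ℝ → EReal} (x' : ℝ) (hx' : (x' : EReal) < θbar)
    (hblow : Tendsto g (Filter.comap Real.toEReal (𝓝[<] θbar)) (𝓝 ⊤)) :
    ∃ c : ℝ, x' < c ∧ (c : EReal) < θbar ∧ 0 < g c := by
  induction θbar using EReal.rec with
  | bot => exact absurd hx' (by simp)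
  | coe r =>
    have hxr : x' < r := by exact_mod_cast hx'
    have hl : Tendsto Real.toEReal (𝓝[<] r) (𝓝[<] ((r : ℝ) : EReal)) := by
      apply tendsto_nhdsWithin_of_tendsto_nhds_of_eventually_within
      · exact (continuous_coe_real_ereal.tendsto r).mono_left nhdsWithin_le_nhds
      · filter_upwards [self_mem_nhdsWithin] with y hy
        simp only [Set.mem_Iio] at hy ⊢
        exact_mod_cast hy
    have hg : Tendsto g (𝓝[<] r) (𝓝 ⊤) :=
      hblow.mono_left (Filter.map_le_iff_le_comap.mp hl)
    have he1 : ∀ᶠ c in 𝓝[<] r, 0 < g c :=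
      hg.eventually (eventually_gt_nhds (by simp : (0 : EReal) < ⊤))
    have he2 : Set.Ioo x' r ∈ 𝓝[<] r := Ioo_mem_nhdsLT_of_mem ⟨hxr, le_rfl⟩
    obtain ⟨c, hc1, hc2⟩ := (he1.and he2).exists
    exact ⟨c, hc2.1, by exact_mod_cast hc2.2, hc1⟩
  | top =>
    have hl : Tendsto Real.toEReal atTop (𝓝[<] (⊤ : EReal)) := by
      have hset : Set.Iio (⊤ : EReal) = {(⊤ : EReal)}ᶜ := by
        ext x; simp [lt_top_iff_ne_top]
      rw [nhdsWithin, hset, ← nhdsWithin, EReal.nhdsWithin_top]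
      exact tendsto_map
    have hg : Tendsto g atTop (𝓝 ⊤) :=
      hblow.mono_left (Filter.map_le_iff_le_comap.mp hl)
    have he1 : ∀ᶠ c in atTop, 0 < g c :=
      hg.eventually (eventually_gt_nhds (by simp : (0 : EReal) < ⊤))
    obtain ⟨c, hc1, hc2⟩ := (he1.and (eventually_gt_atTop x')).exists
    exact ⟨c, hc2, EReal.coe_lt_top c, hc1⟩

/-- **Existence and uniqueness of the adjustment (Lundberg) coefficient.** If `Z₁` is integrable
with `E[Z₁] < 0` and `P[Z₁ > 0] > 0`, and there is `θ̄ ∈ (0, ∞]` with `Γ_Z(θ) < ∞` on `[0, θ̄)`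
and `Γ_Z(θ) → ∞` as `θ ↗ θ̄`, then there is a unique `θ_L ∈ (0, θ̄)` with `Γ_Z(θ_L) = 0`. -/
theorem adjustment_coefficient_exists_unique
    {Ω : Type*} [MeasurableSpace Ω] (P : Measure Ω) [IsProbabilityMeasure P]
    (Z : Ω → ℝ) (hint : Integrable Z P)
    (hmean : ∫ ω, Z ω ∂P < 0)
    (hpos : 0 < P {ω | 0 < Z ω})
    (θbar : EReal) (hθbar : 0 < θbar)
    (hfin : ∀ θ : ℝ, 0 ≤ θ → (θ : EReal) < θbar → cgfE P Z θ ≠ ⊤)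
    (hblow : Tendsto (fun θ : ℝ => cgfE P Z θ)
      (Filter.comap Real.toEReal (𝓝[<] θbar)) (𝓝 ⊤)) :
    ∃! θL : ℝ, 0 < θL ∧ (θL : EReal) < θbar ∧ cgfE P Z θL = 0 := by
  have hZ : AEMeasurable Z P := hint.aemeasurable
  have hIne : ∀ θ : ℝ, 0 ≤ θ → (θ : EReal) < θbar →
      (∫⁻ ω, ENNReal.ofReal (Real.exp (θ * Z ω)) ∂P) ≠ ⊤ := by
    intro θ h1 h2
    have h := hfin θ h1 h2
    rw [cgfE, ne_eq, ENNReal.log_eq_top_iff] at h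
    exact h
  have hInt : ∀ θ : ℝ, 0 ≤ θ → (θ : EReal) < θbar →
      Integrable (fun ω => Real.exp (θ * Z ω)) P :=
    fun θ h1 h2 => integrable_exp_of_lintegral_ne_top hZ (hIne θ h1 h2)
  have hIeq : ∀ θ : ℝ, 0 ≤ θ → (θ : EReal) < θbar →
      (∫⁻ ω, ENNReal.ofReal (Real.exp (θ * Z ω)) ∂P) = ENNReal.ofReal (mgf Z P θ) :=
    fun θ h1 h2 => lintegral_exp_eq_ofReal_mgf (hInt θ h1 h2)
  have hzero_iff : ∀ θ : ℝ, 0 ≤ θ → (θ : EReal) < θbar →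
      (cgfE P Z θ = 0 ↔ mgf Z P θ = 1) := by
    intro θ h1 h2
    rw [cgfE, ENNReal.log_eq_one_iff, hIeq θ h1 h2, ENNReal.ofReal_eq_one]
  obtain ⟨b, hb0, hbθ⟩ : ∃ b : ℝ, 0 < b ∧ (b : EReal) < θbar := by
    obtain ⟨y, h1, h2⟩ := EReal.exists_between_coe_real hθbar
    exact ⟨y, by exact_mod_cast h1, h2⟩
  set θ0 := b / 2 with hθ0def
  have hθ0 : 0 < θ0 := half_pos hb0
  have hθ0b : θ0 < b := by rw [hθ0def]; linarith
  have hcoelt : ∀ u v : ℝ, u ≤ v → (v : EReal) < θbar → (u : EReal) < θbar := by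
    intro u v huv hv
    exact lt_of_le_of_lt (by exact_mod_cast huv) hv
  have hsmall : ∀ᶠ θ in 𝓝[>] (0:ℝ), mgf Z P θ < 1 := by
    apply eventually_mgf_lt_one hint hmean hθ0
    · have h2θ0 : (2:ℝ) * θ0 = b := by rw [hθ0def]; ring
      rw [h2θ0]; exact hInt b hb0.le hbθ
    · intro θ hθ
      exact hInt θ hθ.1.le (hcoelt θ b (hθ.2.trans hθ0b.le) hbθ)
  -- pick θs with mgf < 1
  obtain ⟨θs, hθs1, hθs2⟩ :=
    (hsmall.and (Ioo_mem_nhdsGT_of_mem (Set.left_mem_Ico.mpr hθ0))).exists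
  have hθs0 : 0 < θs := hθs2.1
  have hθsθ0 : θs < θ0 := hθs2.2
  have hθsθ : (θs : EReal) < θbar := hcoelt θs b (hθsθ0.trans hθ0b).le hbθ
  -- uniqueness helper
  have huniq : ∀ y1 y2 : ℝ, (0 < y1 ∧ (y1 : EReal) < θbar ∧ cgfE P Z y1 = 0) →
      (0 < y2 ∧ (y2 : EReal) < θbar ∧ cgfE P Z y2 = 0) → y1 < y2 → False := by
    rintro y1 y2 ⟨hy1, hy1θ, hy1z⟩ ⟨hy2, hy2θ, hy2z⟩ hlt
    obtain ⟨a, ha1, ha2⟩ :=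
      (hsmall.and (Ioo_mem_nhdsGT_of_mem (Set.left_mem_Ico.mpr (lt_min hθ0 hy1)))).exists
    have ha0 : 0 < a := ha2.1
    have hay1 : a < y1 := lt_of_lt_of_le ha2.2 (min_le_right _ _)
    have haθ : (a : EReal) < θbar :=
      hcoelt a b ((lt_of_lt_of_le ha2.2 (min_le_left _ _)).trans hθ0b).le hbθ
    have hden : 0 < y2 - a := by linarith
    set t := (y2 - y1) / (y2 - a) with htdef
    have ht0 : 0 < t := div_pos (by linarith) hden
    have ht1 : t < 1 := (div_lt_one hden).mpr (by linarith)
    have hconv : t * a + (1 - t) * y2 = y1 := by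
      rw [htdef]; field_simp; ring
    have hH := lintegral_exp_holder P hZ (a := a) (b := y2) ht0 ht1
    rw [hconv] at hH
    have hIy1 : (∫⁻ ω, ENNReal.ofReal (Real.exp (y1 * Z ω)) ∂P) = 1 := by
      rw [cgfE] at hy1z; exact ENNReal.log_eq_one_iff.mp hy1z
    have hIy2 : (∫⁻ ω, ENNReal.ofReal (Real.exp (y2 * Z ω)) ∂P) = 1 := by
      rw [cgfE] at hy2z; exact ENNReal.log_eq_one_iff.mp hy2z
    have hIa : (∫⁻ ω, ENNReal.ofReal (Real.exp (a * Z ω)) ∂P) < 1 := by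
      rw [hIeq a ha0.le haθ]
      exact ENNReal.ofReal_lt_one.mpr ha1
    rw [hIy1, hIy2, ENNReal.one_rpow, mul_one] at hH
    exact absurd (lt_of_le_of_lt hH (ENNReal.rpow_lt_one hIa ht0)) (lt_irrefl _)
  -- big point
  obtain ⟨c, hθsc, hcθ, hcpos⟩ := exists_big θs hθsθ hblow
  have hc0 : 0 < c := hθs0.trans hθsc
  have hc1 : 1 < mgf Z P c := by
    rw [cgfE, ENNReal.zero_lt_log_iff, hIeq c hc0.le hcθ] at hcpos
    exact ENNReal.one_lt_ofReal.mp hcpos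
  -- continuity on [θs, c]
  obtain ⟨c', hcc', hc'θ⟩ : ∃ c' : ℝ, c < c' ∧ (c' : EReal) < θbar := by
    obtain ⟨y, h1, h2⟩ := EReal.exists_between_coe_real hcθ
    exact ⟨y, by exact_mod_cast h1, h2⟩
  have hcont : ContinuousOn (mgf Z P) (Set.Icc θs c) := by
    intro θ hθ
    apply ContinuousAt.continuousWithinAt
    have hθmem : θ ∈ Set.Ioo (0:ℝ) c' := ⟨lt_of_lt_of_le hθs0 hθ.1, lt_of_le_of_lt hθ.2 hcc'⟩
    have hnb : Set.Ioo (0:ℝ) c' ∈ 𝓝 θ := Ioo_mem_nhds hθmem.1 hθmem.2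
    have hca : ContinuousAt (fun u => ∫ ω, Real.exp (u * Z ω) ∂P) θ := by
      apply continuousAt_of_dominated (bound := fun ω => Real.exp (c' * Z ω) + 1)
      · filter_upwards [hnb] with u _
        exact (aemeas_exp hZ u).aestronglyMeasurable
      · filter_upwards [hnb] with u hu
        refine Filter.Eventually.of_forall fun ω => ?_
        rw [Real.norm_eq_abs, abs_of_pos (Real.exp_pos _)]
        rcases le_or_gt (Z ω) 0 with hz | hz
        · have h1 : u * Z ω ≤ 0 := mul_nonpos_of_nonneg_of_nonpos hu.1.le hz
          have h2 := Real.exp_le_one_iff.mpr h1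
          have h3 := (Real.exp_pos (c' * Z ω)).le
          linarith
        · have h1 : u * Z ω ≤ c' * Z ω := mul_le_mul_of_nonneg_right hu.2.le hz.le
          have h2 := Real.exp_le_exp.mpr h1
          linarith
      · exact (hInt c' (hc0.trans hcc').le hc'θ).add (integrable_const 1)
      · exact Filter.Eventually.of_forall fun ω =>
          (Real.continuous_exp.comp (continuous_id.mul continuous_const)).continuousAt
    exact hca
  have h1mem : (1:ℝ) ∈ Set.Icc (mgf Z P θs) (mgf Z P c) := ⟨hθs1.le, hc1.le⟩
  obtain ⟨θL, hθLmem, hθL1⟩ := intermediate_value_Icc hθsc.le hcont h1mem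
  have hθL0 : 0 < θL := hθs0.trans_le hθLmem.1
  have hθLθ : (θL : EReal) < θbar := hcoelt θL c hθLmem.2 hcθ
  have hθLz : cgfE P Z θL = 0 := (hzero_iff θL hθL0.le hθLθ).mpr hθL1
  refine ⟨θL, ⟨hθL0, hθLθ, hθLz⟩, ?_⟩
  intro y hy
  by_contra hne
  rcases lt_or_gt_of_ne hne with h | h
  · exact huniq y θL hy ⟨hθL0, hθLθ, hθLz⟩ h
  · exact huniq θL y ⟨hθL0, hθLθ, hθLz⟩ hy h
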